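/- Let A be the (n-1)×(n-1) matrix over F_2 with A[i][i+1]=1 for 1 ≤ i ≤ n-2, last row all ones, and zeros elsewhere. Then A has multiplicative order exactly n: A^n = I and A^k ≠ I for 1 ≤ k ≤ n-1. -/
import Mathlib


/-- The circulant-type matrix `A` of Lemma 1: `A[i][i+1] = 1` for the first `n-2` rows
(0-indexed rows `0,…,n-3`), last row all ones, zeros elsewhere. -/
def Amat (n : ℕ) : Matrix (Fin (n-1)) (Fin (n-1)) (ZMod 2) :=
  Matrix.of fun i j => if (i : ℕ) = n - 2 then 1 else if (j : ℕ) = (i : ℕ) + 1 then 1 else 0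

/-- Explicit formula for `Amat n ^ k`, valid for `0 ≤ k ≤ n`. -/
def Bmat (n k : ℕ) : Matrix (Fin (n-1)) (Fin (n-1)) (ZMod 2) :=
  Matrix.of fun i j =>
    if (i : ℕ) + k < n - 1 then (if (j : ℕ) = (i : ℕ) + k then 1 else 0)
    else if (i : ℕ) + k = n - 1 then 1
    else if (j : ℕ) + n = (i : ℕ) + k then 1 else 0

lemma Bmat_zero (n : ℕ) : Bmat n 0 = 1 := by
  ext i j
  simp only [Bmat, Matrix.of_apply, Matrix.one_apply, add_zero]
  rw [if_pos i.isLt]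
  by_cases h : i = j
  · subst h; simp
  · rw [if_neg (fun hj => h (Fin.ext hj.symm)), if_neg h]

lemma Bmat_n (n : ℕ) (hn : 3 ≤ n) : Bmat n n = 1 := by
  ext i j
  have hi := i.isLt
  have hj := j.isLt
  simp only [Bmat, Matrix.of_apply, Matrix.one_apply]
  rw [if_neg (by omega), if_neg (by omega)]
  by_cases h : i = j
  · subst h; rw [if_pos rfl, if_pos (by omega)]
  · rw [if_neg (fun hj => h (Fin.ext (by omega))), if_neg h]

lemma step (n : ℕ) (hn : 3 ≤ n) (k : ℕ) (hk : k ≤ n - 1) :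
    Amat n * Bmat n k = Bmat n (k+1) := by
  ext i j
  have hi := i.isLt
  have hj := j.isLt
  rw [Matrix.mul_apply]
  by_cases hrow : (i : ℕ) = n - 2
  · -- last row
    simp only [Amat, Matrix.of_apply, if_pos hrow, one_mul]
    have hterm : ∀ l : Fin (n-1), Bmat n k l j =
        (if (l : ℕ) + k < n - 1 ∧ (j : ℕ) = (l : ℕ) + k then (1 : ZMod 2) else 0)
        + (if (l : ℕ) + k = n - 1 then (1 : ZMod 2) else 0)
        + (if n - 1 < (l : ℕ) + k ∧ (j : ℕ) + n = (l : ℕ) + k then (1 : ZMod 2) else 0) := by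
      intro l
      have hl := l.isLt
      simp only [Bmat, Matrix.of_apply]
      split_ifs <;> first | decide | (exfalso; omega)
    rw [Finset.sum_congr rfl (fun l _ => hterm l), Finset.sum_add_distrib,
      Finset.sum_add_distrib]
    have S1 : (∑ l : Fin (n-1), if (l : ℕ) + k < n - 1 ∧ (j : ℕ) = (l : ℕ) + k
        then (1 : ZMod 2) else 0) = if k ≤ (j : ℕ) then 1 else 0 := by
      by_cases hkj : k ≤ (j : ℕ)
      · rw [if_pos hkj,
          Finset.sum_eq_single (⟨(j : ℕ) - k, by omega⟩ : Fin (n-1))]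
        · rw [if_pos (by constructor <;> simp <;> omega)]
        · intro l _ hl
          rw [if_neg]
          rintro ⟨h1, h2⟩
          exact hl (Fin.ext (by simp only [Fin.val_mk]; omega))
        · intro h; exact absurd (Finset.mem_univ _) h
      · rw [if_neg hkj]
        apply Finset.sum_eq_zero
        intro l _
        rw [if_neg]
        rintro ⟨h1, h2⟩
        omega
    have S2 : (∑ l : Fin (n-1), if (l : ℕ) + k = n - 1 then (1 : ZMod 2) else 0)
        = if 1 ≤ k then 1 else 0 := by
      by_cases hk1 : 1 ≤ k
      · rw [if_pos hk1,
          Finset.sum_eq_single (⟨n - 1 - k, by omega⟩ : Fin (n-1))]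
        · rw [if_pos (by simp; omega)]
        · intro l _ hl
          rw [if_neg]
          intro h1
          exact hl (Fin.ext (by simp only [Fin.val_mk]; omega))
        · intro h; exact absurd (Finset.mem_univ _) h
      · rw [if_neg hk1]
        apply Finset.sum_eq_zero
        intro l _
        have hl := l.isLt
        rw [if_neg (by omega)]
    have S3 : (∑ l : Fin (n-1), if n - 1 < (l : ℕ) + k ∧ (j : ℕ) + n = (l : ℕ) + k
        then (1 : ZMod 2) else 0) = if (j : ℕ) + 2 ≤ k then 1 else 0 := by
      by_cases hjk : (j : ℕ) + 2 ≤ k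
      · rw [if_pos hjk,
          Finset.sum_eq_single (⟨(j : ℕ) + n - k, by omega⟩ : Fin (n-1))]
        · rw [if_pos (by constructor <;> simp <;> omega)]
        · intro l _ hl
          rw [if_neg]
          rintro ⟨h1, h2⟩
          exact hl (Fin.ext (by simp only [Fin.val_mk]; omega))
        · intro h; exact absurd (Finset.mem_univ _) h
      · rw [if_neg hjk]
        apply Finset.sum_eq_zero
        intro l _
        have hl := l.isLt
        rw [if_neg]
        rintro ⟨h1, h2⟩
        omega
    rw [S1, S2, S3]
    simp only [Bmat, Matrix.of_apply]
    split_ifs <;> first | decide | (exfalso; omega)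
  · -- other rows: shift
    have hi1 : (i : ℕ) + 1 < n - 1 := by omega
    simp only [Amat, Matrix.of_apply, if_neg hrow]
    rw [Finset.sum_eq_single (⟨(i : ℕ) + 1, hi1⟩ : Fin (n-1))]
    · rw [if_pos rfl, one_mul]
      simp only [Bmat, Matrix.of_apply]
      have h : (i : ℕ) + 1 + k = (i : ℕ) + (k + 1) := by omega
      simp only [h]
    · intro l _ hl
      rw [if_neg (fun h => hl (Fin.ext (by simp only [Fin.val_mk]; omega))), zero_mul]
    · intro h; exact absurd (Finset.mem_univ _) h

/-- `A` has multiplicative order exactly `n`: `A^n = I` and `A^k ≠ I` for `1 ≤ k ≤ n-1`. -/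
theorem stmt_5 (n : ℕ) (hn : 3 ≤ n) :
    Amat n ^ n = 1 ∧ ∀ k : ℕ, 1 ≤ k → k ≤ n - 1 → Amat n ^ k ≠ 1 := by
  have hpow : ∀ k, k ≤ n → Amat n ^ k = Bmat n k := by
    intro k
    induction k with
    | zero => intro _; rw [pow_zero, Bmat_zero]
    | succ k ih =>
      intro hk
      rw [pow_succ', ih (by omega), step n hn k (by omega)]
  constructor
  · rw [hpow n le_rfl]; exact Bmat_n n hn
  · intro k hk1 hk2 hEq
    rw [hpow k (by omega)] at hEq
    by_cases hk : k < n - 1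
    · have h := congrFun (congrFun hEq ⟨0, by omega⟩) ⟨k, hk⟩
      simp only [Bmat, Matrix.of_apply, Matrix.one_apply] at h
      rw [if_pos (by simpa using hk), if_pos (by simp),
        if_neg (fun he : (⟨0, by omega⟩ : Fin (n-1)) = ⟨k, hk⟩ => by
          have := Fin.mk.injEq .. ▸ he; omega)] at h
      exact one_ne_zero h
    · have hkn : k = n - 1 := by omega
      have h := congrFun (congrFun hEq ⟨0, by omega⟩) ⟨1, by omega⟩
      simp only [Bmat, Matrix.of_apply, Matrix.one_apply] at h
      rw [if_neg (by simp; omega), if_pos (by simp; omega),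
        if_neg (fun he : (⟨0, by omega⟩ : Fin (n-1)) = ⟨1, by omega⟩ => by
          have := Fin.mk.injEq .. ▸ he; omega)] at h
      exact one_ne_zero h
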